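/- Let (X, Π, ∇_D) be a gradient discretisation on Ω with coercivity constant C_D, and let Λ₁, Λ₂ : Ω → ℝ^{d×d} be measurable, symmetric-valued, with λ̲ᵢ|ξ|² ≤ Λᵢ(x)ξ·ξ ≤ λ̄ᵢ|ξ|² for a.e. x ∈ Ω and all ξ ∈ ℝ^d, 0 < λ̲ᵢ ≤ λ̄ᵢ (i = 1, 2), and let F₁, F₂ : ℝ² → ℝ be Lipschitz with constant L, i.e. |Fᵢ(a,b) − Fᵢ(a',b')| ≤ L(|a−a'| + |b−b'|). Fix δt > 0 and (u₀, v₀) ∈ X². For (w₁, w₂) ∈ X², let (u, v) ∈ X² be the unique pair with (1/δt)∫_Ω Π(u − u₀)Πφ + ∫_Ω Λ₁∇_D u·∇_D φ = ∫_Ω F₁(Πw₁, Πw₂)Πφ and (1/δt)∫_Ω Π(v − v₀)Πψ + ∫_Ω Λ₂∇_D v·∇_D ψ = ∫_Ω F₂(Πw₁, Πw₂)Πψ for all φ, ψ ∈ X, and similarly let (ũ, ṽ) correspond to (w̃₁, w̃₂) ∈ X². Then ‖∇_D(u − ũ)‖_{L²(Ω)^d} + ‖∇_D(v − ṽ)‖_{L²(Ω)^d}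 ≤ (√2/2) L C_D √δt (λ̲₁^{−1/2} + λ̲₂^{−1/2}) (‖∇_D(w₁ − w̃₁)‖_{L²(Ω)^d} + ‖∇_D(w₂ − w̃₂)‖_{L²(Ω)^d}); i.e. the map G : X² → X², G(w₁, w₂) = (u, v), is Lipschitz with constant (√2/2) L C_D √δt (λ̲₁^{−1/2} + λ̲₂^{−1/2}) for the norm ‖(w₁, w₂)‖ = ‖∇_D w₁‖_{L²(Ω)^d} + ‖∇_D w₂‖_{L²(Ω)^d}. -/

import Mathlib

open MeasureTheory Matrix

/-- The bilinear form `A a · b` associated with a `d × d` real matrix. -/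
noncomputable def qf {d : ℕ} (A : Matrix (Fin d) (Fin d) ℝ)
    (a b : EuclideanSpace ℝ (Fin d)) : ℝ :=
  A.mulVec (EuclideanSpace.equiv (Fin d) ℝ a) ⬝ᵥ (EuclideanSpace.equiv (Fin d) ℝ b)

lemma qf_eq_sum {d : ℕ} (A : Matrix (Fin d) (Fin d) ℝ) (a b : EuclideanSpace ℝ (Fin d)) :
    qf A a b = ∑ i, ∑ j, A i j * a j * b i := by
  simp [qf, Matrix.mulVec, dotProduct, Finset.sum_mul]

lemma qf_sub_left {d : ℕ} (A : Matrix (Fin d) (Fin d) ℝ) (a a' b : EuclideanSpace ℝ (Fin d)) :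
    qf A (a - a') b = qf A a b - qf A a' b := by
  simp only [qf_eq_sum, ← Finset.sum_sub_distrib]
  refine Finset.sum_congr rfl fun i _ => Finset.sum_congr rfl fun j _ => ?_
  have : (a - a') j = a j - a' j := rfl
  rw [this]; ring

lemma qf_comm {d : ℕ} {A : Matrix (Fin d) (Fin d) ℝ} (hA : A.IsSymm)
    (a b : EuclideanSpace ℝ (Fin d)) : qf A a b = qf A b a := by
  simp only [qf_eq_sum]
  rw [Finset.sum_comm]
  refine Finset.sum_congr rfl fun j _ => Finset.sum_congr rfl fun i _ => ?_
  rw [← hA.apply i j]; ring_nf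

lemma qf_add_left {d : ℕ} (A : Matrix (Fin d) (Fin d) ℝ) (a a' b : EuclideanSpace ℝ (Fin d)) :
    qf A (a + a') b = qf A a b + qf A a' b := by
  simp only [qf_eq_sum, ← Finset.sum_add_distrib]
  refine Finset.sum_congr rfl fun i _ => Finset.sum_congr rfl fun j _ => ?_
  have : (a + a') j = a j + a' j := rfl
  rw [this]; ring

lemma qf_add_right {d : ℕ} (A : Matrix (Fin d) (Fin d) ℝ) (a b b' : EuclideanSpace ℝ (Fin d)) :
    qf A a (b + b') = qf A a b + qf A a b' := by
  simp only [qf_eq_sum, ← Finset.sum_add_distrib]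
  refine Finset.sum_congr rfl fun i _ => Finset.sum_congr rfl fun j _ => ?_
  have : (b + b') i = b i + b' i := rfl
  rw [this]; ring

lemma qf_sub_right {d : ℕ} (A : Matrix (Fin d) (Fin d) ℝ) (a b b' : EuclideanSpace ℝ (Fin d)) :
    qf A a (b - b') = qf A a b - qf A a b' := by
  simp only [qf_eq_sum, ← Finset.sum_sub_distrib]
  refine Finset.sum_congr rfl fun i _ => Finset.sum_congr rfl fun j _ => ?_
  have : (b - b') i = b i - b' i := rfl
  rw [this]; ring

lemma qf_abs_le {d : ℕ} {A : Matrix (Fin d) (Fin d) ℝ} (hA : A.IsSymm) {hi : ℝ}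
    (hell : ∀ ξ : EuclideanSpace ℝ (Fin d), 0 ≤ qf A ξ ξ ∧ qf A ξ ξ ≤ hi * ‖ξ‖ ^ 2)
    (a b : EuclideanSpace ℝ (Fin d)) :
    |qf A a b| ≤ hi / 2 * (‖a‖ ^ 2 + ‖b‖ ^ 2) := by
  have hpol : qf A a b = (qf A (a + b) (a + b) - qf A (a - b) (a - b)) / 4 := by
    rw [qf_add_left, qf_add_right, qf_add_right, qf_sub_left, qf_sub_right, qf_sub_right,
      qf_comm hA b a]
    ring
  have h1 := hell (a + b)
  have h2 := hell (a - b)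
  have hab : ‖a + b‖ ^ 2 ≤ 2 * (‖a‖ ^ 2 + ‖b‖ ^ 2) := by
    nlinarith [norm_add_le a b, norm_nonneg a, norm_nonneg b, norm_nonneg (a + b),
      sq_nonneg (‖a‖ - ‖b‖)]
  have hab' : ‖a - b‖ ^ 2 ≤ 2 * (‖a‖ ^ 2 + ‖b‖ ^ 2) := by
    nlinarith [norm_sub_le a b, norm_nonneg a, norm_nonneg b, norm_nonneg (a - b),
      sq_nonneg (‖a‖ - ‖b‖)]
  rcases le_or_gt 0 hi with hhi | hhi
  · rw [abs_le]
    constructor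
    · nlinarith [h1.1, h1.2, h2.1, h2.2, mul_le_mul_of_nonneg_left hab' hhi]
    · nlinarith [h1.1, h1.2, h2.1, h2.2, mul_le_mul_of_nonneg_left hab hhi]
  · have ha : a = 0 := by
      have h3 := hell a
      have : ‖a‖ ^ 2 = 0 := by nlinarith [sq_nonneg ‖a‖]
      simpa [pow_eq_zero_iff] using this
    have hb : b = 0 := by
      have h3 := hell b
      have : ‖b‖ ^ 2 = 0 := by nlinarith [sq_nonneg ‖b‖]
      simpa [pow_eq_zero_iff] using this
    subst ha hb
    simp [qf_eq_sum]

lemma aesm_qf {d : ℕ} {μ : Measure (EuclideanSpace ℝ (Fin d))}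
    {Λ : EuclideanSpace ℝ (Fin d) → Matrix (Fin d) (Fin d) ℝ}
    (hΛ : ∀ i j, Measurable fun x => Λ x i j)
    {f g : EuclideanSpace ℝ (Fin d) → EuclideanSpace ℝ (Fin d)}
    (hf : AEStronglyMeasurable f μ) (hg : AEStronglyMeasurable g μ) :
    AEStronglyMeasurable (fun x => qf (Λ x) (f x) (g x)) μ := by
  have hf' : ∀ j : Fin d, AEMeasurable (fun x => f x j) μ := fun j =>
    ((EuclideanSpace.proj j : EuclideanSpace ℝ (Fin d) →L[ℝ] ℝ).continuous.comp_aestronglyMeasurable hf).aemeasurable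
  have hg' : ∀ i : Fin d, AEMeasurable (fun x => g x i) μ := fun i =>
    ((EuclideanSpace.proj i : EuclideanSpace ℝ (Fin d) →L[ℝ] ℝ).continuous.comp_aestronglyMeasurable hg).aemeasurable
  simp_rw [qf_eq_sum]
  exact (Finset.aemeasurable_fun_sum _ fun i _ => Finset.aemeasurable_fun_sum _ fun j _ =>
    (((hΛ i j).aemeasurable.mul (hf' j)).mul (hg' i))).aestronglyMeasurable

section L2
variable {α : Type*} {m : MeasurableSpace α} {μ : Measure α}
variable {E : Type*} [NormedAddCommGroup E] [InnerProductSpace ℝ E]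

lemma L2_integral_mul_eq_inner (f g : Lp ℝ 2 μ) :
    ∫ x, f x * g x ∂μ = (inner ℝ f g : ℝ) := by
  rw [L2.inner_def]
  exact integral_congr_ae (Filter.Eventually.of_forall fun x => by
    simp [RCLike.inner_apply, mul_comm])

lemma L2_integrable_mul (f g : Lp ℝ 2 μ) : Integrable (fun x => f x * g x) μ := by
  have := L2.integrable_inner (𝕜 := ℝ) f g
  simpa [RCLike.inner_apply, mul_comm] using this

lemma L2_norm_sq (f : Lp E 2 μ) : ‖f‖ ^ 2 = ∫ x, ‖f x‖ ^ 2 ∂μ := by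
  have h : (inner ℝ f f : ℝ) = ∫ x, (inner ℝ (f x) (f x) : ℝ) ∂μ := L2.inner_def f f
  rw [← real_inner_self_eq_norm_sq, h]
  exact integral_congr_ae (Filter.Eventually.of_forall fun x =>
    real_inner_self_eq_norm_sq _)

lemma L2_integrable_normsq (f : Lp E 2 μ) : Integrable (fun x => ‖f x‖ ^ 2) μ := by
  have := L2.integrable_inner (𝕜 := ℝ) f f
  exact this.congr (Filter.Eventually.of_forall fun x => real_inner_self_eq_norm_sq _)

end L2

lemma key_arith {P G S T CD L lo δt : ℝ} (hδt : 0 < δt) (hlo : 0 < lo) (hL : 0 ≤ L)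
    (hCD : 0 ≤ CD) (hG0 : 0 ≤ G) (hS0 : 0 ≤ S) (hT0 : 0 ≤ T) (hST : S ≤ CD * T)
    (master : (1 / δt) * P ^ 2 + lo * G ^ 2 ≤ L * (S * P)) :
    G ≤ L * CD * Real.sqrt δt / (2 * Real.sqrt lo) * T := by
  have hm2 : P ^ 2 + δt * (lo * G ^ 2) ≤ δt * (L * (S * P)) := by
    have h5 := mul_le_mul_of_nonneg_left master hδt.le
    have h6 : δt * ((1 / δt) * P ^ 2 + lo * G ^ 2) = P ^ 2 + δt * (lo * G ^ 2) := by
      field_simp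
    rw [h6] at h5
    linarith
  have hB : lo * G ^ 2 ≤ δt * (L * S) ^ 2 / 4 := by
    have hA : δt * (lo * G ^ 2) ≤ δt * (δt * (L * S) ^ 2 / 4) := by
      nlinarith [sq_nonneg (P - δt * (L * S) / 2)]
    exact (mul_le_mul_iff_right₀ hδt).mp hA
  have hc2 : (L * S) ^ 2 ≤ (L * (CD * T)) ^ 2 := by
    have h0 : 0 ≤ L * S := mul_nonneg hL hS0
    have h1 : L * S ≤ L * (CD * T) := mul_le_mul_of_nonneg_left hST hL
    nlinarith
  have hG2 : G ^ 2 ≤ δt * (L * (CD * T)) ^ 2 / 4 / lo := by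
    rw [le_div_iff₀ hlo]
    nlinarith [hB, hc2, hδt.le]
  have hR0 : 0 ≤ L * CD * Real.sqrt δt / (2 * Real.sqrt lo) * T := by
    have h2 : 0 < 2 * Real.sqrt lo := by positivity
    exact mul_nonneg (div_nonneg (by positivity) h2.le) hT0
  have hR2 : (L * CD * Real.sqrt δt / (2 * Real.sqrt lo) * T) ^ 2
      = δt * (L * (CD * T)) ^ 2 / 4 / lo := by
    rw [mul_pow, div_pow, mul_pow, mul_pow, mul_pow, Real.sq_sqrt hδt.le, Real.sq_sqrt hlo.le]
    field_simp
    ring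
  calc G = Real.sqrt (G ^ 2) := (Real.sqrt_sq hG0).symm
    _ ≤ Real.sqrt ((L * CD * Real.sqrt δt / (2 * Real.sqrt lo) * T) ^ 2) :=
        Real.sqrt_le_sqrt (by rw [hR2]; exact hG2)
    _ = L * CD * Real.sqrt δt / (2 * Real.sqrt lo) * T := Real.sqrt_sq hR0

lemma key {d : ℕ} {μ : Measure (EuclideanSpace ℝ (Fin d))} [IsFiniteMeasure μ]
    {X : Type*} [AddCommGroup X] [Module ℝ X]
    (Pi : X →ₗ[ℝ] Lp ℝ 2 μ)
    (grad : X →ₗ[ℝ] Lp (EuclideanSpace ℝ (Fin d)) 2 μ)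
    {CD : ℝ} (hCD : 0 ≤ CD) (hcoer : ∀ w : X, ‖Pi w‖ ≤ CD * ‖grad w‖)
    {Λ : EuclideanSpace ℝ (Fin d) → Matrix (Fin d) (Fin d) ℝ}
    (hΛmeas : ∀ i j, Measurable fun x => Λ x i j)
    {lo hi : ℝ} (hlo : 0 < lo)
    (hsym : ∀ᵐ x ∂μ, (Λ x).IsSymm)
    (hell : ∀ᵐ x ∂μ, ∀ ξ : EuclideanSpace ℝ (Fin d),
      lo * ‖ξ‖ ^ 2 ≤ qf (Λ x) ξ ξ ∧ qf (Λ x) ξ ξ ≤ hi * ‖ξ‖ ^ 2)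
    {F : ℝ → ℝ → ℝ} {L : ℝ} (hL : 0 ≤ L)
    (hF : ∀ a a' b b' : ℝ, |F a b - F a' b'| ≤ L * (|a - a'| + |b - b'|))
    {δt : ℝ} (hδt : 0 < δt) (u₀ : X) (w₁ w₂ w₁' w₂' u u' : X)
    (hu : ∀ φ : X,
      (1 / δt) * (∫ x, (Pi (u - u₀)) x * (Pi φ) x ∂μ)
        + (∫ x, qf (Λ x) ((grad u) x) ((grad φ) x) ∂μ)
      = ∫ x, F ((Pi w₁) x) ((Pi w₂) x) * (Pi φ) x ∂μ)
    (hu' : ∀ φ : X,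
      (1 / δt) * (∫ x, (Pi (u' - u₀)) x * (Pi φ) x ∂μ)
        + (∫ x, qf (Λ x) ((grad u') x) ((grad φ) x) ∂μ)
      = ∫ x, F ((Pi w₁') x) ((Pi w₂') x) * (Pi φ) x ∂μ) :
    ‖grad (u - u')‖ ≤ L * CD * Real.sqrt δt / (2 * Real.sqrt lo) *
      (‖grad (w₁ - w₁')‖ + ‖grad (w₂ - w₂')‖) := by
  set e := u - u' with he
  -- integrability of qf terms
  have hqf_int : ∀ a b : X, Integrable (fun x => qf (Λ x) ((grad a) x) ((grad b) x)) μ := by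
    intro a b
    refine Integrable.mono'
      (((L2_integrable_normsq (grad a)).add (L2_integrable_normsq (grad b))).const_mul (hi / 2))
      (aesm_qf hΛmeas (Lp.aestronglyMeasurable _) (Lp.aestronglyMeasurable _)) ?_
    filter_upwards [hsym, hell] with x hx1 hx2
    have h0 : ∀ ξ : EuclideanSpace ℝ (Fin d), 0 ≤ qf (Λ x) ξ ξ ∧ qf (Λ x) ξ ξ ≤ hi * ‖ξ‖ ^ 2 :=
      fun ξ => ⟨le_trans (by positivity) (hx2 ξ).1, (hx2 ξ).2⟩
    simpa [Real.norm_eq_abs] using qf_abs_le hx1 h0 ((grad a) x) ((grad b) x)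
  -- continuity / MemLp of the nonlinear term
  have hcont : Continuous (fun p : ℝ × ℝ => F p.1 p.2) := by
    refine (LipschitzWith.of_dist_le_mul (K := (2 * L).toNNReal) fun p q => ?_).continuous
    rw [Real.coe_toNNReal _ (by positivity)]
    rw [Real.dist_eq, Prod.dist_eq, Real.dist_eq, Real.dist_eq]
    calc |F p.1 p.2 - F q.1 q.2| ≤ L * (|p.1 - q.1| + |p.2 - q.2|) := hF _ _ _ _
      _ ≤ 2 * L * max |p.1 - q.1| |p.2 - q.2| := by
          have h1 := le_max_left |p.1 - q.1| |p.2 - q.2|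
          have h2 := le_max_right |p.1 - q.1| |p.2 - q.2|
          nlinarith
  have hFmem : ∀ a b : X, MemLp (fun x => F ((Pi a) x) ((Pi b) x)) 2 μ := by
    intro a b
    have haesm : AEStronglyMeasurable (fun x => F ((Pi a) x) ((Pi b) x)) μ :=
      hcont.comp_aestronglyMeasurable
        ((Lp.aestronglyMeasurable (Pi a)).prodMk (Lp.aestronglyMeasurable (Pi b)))
    have hg : MemLp (fun x => |F 0 0| + L * ‖(Pi a) x‖ + L * ‖(Pi b) x‖) 2 μ :=
      ((memLp_const (μ := μ) (p := 2) (|F 0 0|)).add ((Lp.memLp (Pi a)).norm.const_mul L)).add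
        ((Lp.memLp (Pi b)).norm.const_mul L)
    refine hg.of_le haesm (Filter.Eventually.of_forall fun x => ?_)
    have h1 := hF ((Pi a) x) 0 ((Pi b) x) 0
    have h2 : |F ((Pi a) x) ((Pi b) x)| ≤ |F 0 0| + L * (|(Pi a) x| + |(Pi b) x|) := by
      have := abs_sub_abs_le_abs_sub (F ((Pi a) x) ((Pi b) x)) (F 0 0)
      simp only [sub_zero] at h1
      linarith
    rw [Real.norm_eq_abs, Real.norm_eq_abs]
    have h3 : |F 0 0| + L * (|(Pi a) x| + |(Pi b) x|)
        ≤ |F 0 0| + L * ‖(Pi a) x‖ + L * ‖(Pi b) x‖ := by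
      rw [Real.norm_eq_abs, Real.norm_eq_abs]; ring_nf; rfl
    refine le_trans h2 (le_trans h3 (le_abs_self _))
  have hFint : ∀ a b c : X,
      Integrable (fun x => F ((Pi a) x) ((Pi b) x) * (Pi c) x) μ := by
    intro a b c
    have := L2_integrable_mul ((hFmem a b).toLp _) (Pi c)
    refine this.congr ?_
    filter_upwards [(hFmem a b).coeFn_toLp] with x hx
    rw [hx]
  -- subtraction of the two discrete equations, tested against e
  have h1 := hu e
  have h2 := hu' e
  have key1 : (∫ x, (Pi (u - u₀)) x * (Pi e) x ∂μ) - (∫ x, (Pi (u' - u₀)) x * (Pi e) x ∂μ)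
      = ∫ x, (Pi e) x * (Pi e) x ∂μ := by
    rw [← integral_sub (L2_integrable_mul _ _) (L2_integrable_mul _ _)]
    refine integral_congr_ae ?_
    have hPie : Pi (u - u₀) - Pi (u' - u₀) = Pi e := by
      rw [← map_sub]; congr 1; rw [he]; abel
    have hae : ⇑(Pi e) =ᵐ[μ] ⇑(Pi (u - u₀)) - ⇑(Pi (u' - u₀)) := by
      rw [← hPie]; exact Lp.coeFn_sub _ _
    filter_upwards [hae] with x hx
    have hs : (⇑(Pi (u - u₀)) - ⇑(Pi (u' - u₀))) x
        = (Pi (u - u₀)) x - (Pi (u' - u₀)) x := rfl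
    rw [hx, hs]; ring
  have key2 : (∫ x, qf (Λ x) ((grad u) x) ((grad e) x) ∂μ)
        - (∫ x, qf (Λ x) ((grad u') x) ((grad e) x) ∂μ)
      = ∫ x, qf (Λ x) ((grad e) x) ((grad e) x) ∂μ := by
    rw [← integral_sub (hqf_int u e) (hqf_int u' e)]
    refine integral_congr_ae ?_
    have hae : ⇑(grad e) =ᵐ[μ] ⇑(grad u) - ⇑(grad u') := by
      rw [he, map_sub]; exact Lp.coeFn_sub _ _
    filter_upwards [hae] with x hx
    have hs : (⇑(grad u) - ⇑(grad u')) x = (grad u) x - (grad u') x := rfl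
    rw [hx, hs, qf_sub_left]
  have key3 : (∫ x, F ((Pi w₁) x) ((Pi w₂) x) * (Pi e) x ∂μ)
        - (∫ x, F ((Pi w₁') x) ((Pi w₂') x) * (Pi e) x ∂μ)
      = ∫ x, (F ((Pi w₁) x) ((Pi w₂) x) - F ((Pi w₁') x) ((Pi w₂') x)) * (Pi e) x ∂μ := by
    rw [← integral_sub (hFint w₁ w₂ e) (hFint w₁' w₂' e)]
    exact integral_congr_ae (Filter.Eventually.of_forall fun x => by ring)
  have h3 : (1 / δt) * (∫ x, (Pi e) x * (Pi e) x ∂μ)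
        + (∫ x, qf (Λ x) ((grad e) x) ((grad e) x) ∂μ)
      = ∫ x, (F ((Pi w₁) x) ((Pi w₂) x) - F ((Pi w₁') x) ((Pi w₂') x)) * (Pi e) x ∂μ := by
    rw [← key1, ← key2, ← key3]; ring_nf
    linear_combination h1 - h2
  -- lower bound on elliptic term
  have hP2 : (∫ x, (Pi e) x * (Pi e) x ∂μ) = ‖Pi e‖ ^ 2 := by
    rw [L2_integral_mul_eq_inner, real_inner_self_eq_norm_sq]
  have hG : lo * ‖grad e‖ ^ 2 ≤ ∫ x, qf (Λ x) ((grad e) x) ((grad e) x) ∂μ := by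
    have heq : lo * ‖grad e‖ ^ 2 = ∫ x, lo * ‖(grad e) x‖ ^ 2 ∂μ := by
      rw [L2_norm_sq, ← integral_const_mul]
    rw [heq]
    refine integral_mono_ae ((L2_integrable_normsq (grad e)).const_mul lo) (hqf_int e e) ?_
    filter_upwards [hell] with x hx
    exact (hx _).1
  -- upper bound on the RHS
  have hD1 : Pi (w₁ - w₁') = Pi w₁ - Pi w₁' := map_sub Pi w₁ w₁'
  have hD2 : Pi (w₂ - w₂') = Pi w₂ - Pi w₂' := map_sub Pi w₂ w₂'
  set D1 : Lp ℝ 2 μ := Pi (w₁ - w₁') with hD1def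
  set D2 : Lp ℝ 2 μ := Pi (w₂ - w₂') with hD2def
  have hRHS : (∫ x, (F ((Pi w₁) x) ((Pi w₂) x) - F ((Pi w₁') x) ((Pi w₂') x)) * (Pi e) x ∂μ)
      ≤ L * ((‖D1‖ + ‖D2‖) * ‖Pi e‖) := by
    have hintL : Integrable
        (fun x => (F ((Pi w₁) x) ((Pi w₂) x) - F ((Pi w₁') x) ((Pi w₂') x)) * (Pi e) x) μ := by
      refine ((hFint w₁ w₂ e).sub (hFint w₁' w₂' e)).congr
        (Filter.Eventually.of_forall fun x => (sub_mul _ _ _).symm)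
    have haeD1 : ⇑D1 =ᵐ[μ] ⇑(Pi w₁) - ⇑(Pi w₁') := by rw [hD1]; exact Lp.coeFn_sub _ _
    have haeD2 : ⇑D2 =ᵐ[μ] ⇑(Pi w₂) - ⇑(Pi w₂') := by rw [hD2]; exact Lp.coeFn_sub _ _
    have step1 : (∫ x, (F ((Pi w₁) x) ((Pi w₂) x) - F ((Pi w₁') x) ((Pi w₂') x)) * (Pi e) x ∂μ)
        ≤ ∫ x, L * ((|D1| : Lp ℝ 2 μ) x * (|Pi e| : Lp ℝ 2 μ) x
            + (|D2| : Lp ℝ 2 μ) x * (|Pi e| : Lp ℝ 2 μ) x) ∂μ := by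
      refine integral_mono_ae hintL
        (((L2_integrable_mul |D1| |Pi e|).add (L2_integrable_mul |D2| |Pi e|)).const_mul L) ?_
      filter_upwards [haeD1, haeD2, Lp.coeFn_abs D1, Lp.coeFn_abs D2, Lp.coeFn_abs (Pi e)]
        with x hx1 hx2 ha1 ha2 ha3
      have hx1' : D1 x = (Pi w₁) x - (Pi w₁') x := by rw [hx1]; rfl
      have hx2' : D2 x = (Pi w₂) x - (Pi w₂') x := by rw [hx2]; rfl
      have hb1 : (|D1| : Lp ℝ 2 μ) x = |(Pi w₁) x - (Pi w₁') x| := by rw [ha1, hx1']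
      have hb2 : (|D2| : Lp ℝ 2 μ) x = |(Pi w₂) x - (Pi w₂') x| := by rw [ha2, hx2']
      have hb3 : (|Pi e| : Lp ℝ 2 μ) x = |(Pi e) x| := ha3
      rw [hb1, hb2, hb3]
      have hstep : (F ((Pi w₁) x) ((Pi w₂) x) - F ((Pi w₁') x) ((Pi w₂') x)) * (Pi e) x
          ≤ |F ((Pi w₁) x) ((Pi w₂) x) - F ((Pi w₁') x) ((Pi w₂') x)| * |(Pi e) x| := by
        rw [← abs_mul]; exact le_abs_self _
      refine hstep.trans ?_
      have := mul_le_mul_of_nonneg_right (hF ((Pi w₁) x) ((Pi w₁') x) ((Pi w₂) x) ((Pi w₂') x))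
        (abs_nonneg ((Pi e) x))
      calc |F ((Pi w₁) x) ((Pi w₂) x) - F ((Pi w₁') x) ((Pi w₂') x)| * |(Pi e) x|
          ≤ L * (|(Pi w₁) x - (Pi w₁') x| + |(Pi w₂) x - (Pi w₂') x|) * |(Pi e) x| := this
        _ = L * (|(Pi w₁) x - (Pi w₁') x| * |(Pi e) x|
            + |(Pi w₂) x - (Pi w₂') x| * |(Pi e) x|) := by ring
    have step2 : (∫ x, L * ((|D1| : Lp ℝ 2 μ) x * (|Pi e| : Lp ℝ 2 μ) x
            + (|D2| : Lp ℝ 2 μ) x * (|Pi e| : Lp ℝ 2 μ) x) ∂μ)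
        = L * ((inner ℝ |D1| |Pi e| : ℝ) + (inner ℝ |D2| |Pi e| : ℝ)) := by
      rw [integral_const_mul, integral_add (L2_integrable_mul _ _) (L2_integrable_mul _ _),
        L2_integral_mul_eq_inner, L2_integral_mul_eq_inner]
    have step3 : (inner ℝ (|D1| : Lp ℝ 2 μ) |Pi e| : ℝ) ≤ ‖D1‖ * ‖Pi e‖ := by
      have := real_inner_le_norm (|D1| : Lp ℝ 2 μ) |Pi e|
      rwa [norm_abs_eq_norm, norm_abs_eq_norm] at this
    have step4 : (inner ℝ (|D2| : Lp ℝ 2 μ) |Pi e| : ℝ) ≤ ‖D2‖ * ‖Pi e‖ := by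
      have := real_inner_le_norm (|D2| : Lp ℝ 2 μ) |Pi e|
      rwa [norm_abs_eq_norm, norm_abs_eq_norm] at this
    calc (∫ x, (F ((Pi w₁) x) ((Pi w₂) x) - F ((Pi w₁') x) ((Pi w₂') x)) * (Pi e) x ∂μ)
        ≤ ∫ x, L * ((|D1| : Lp ℝ 2 μ) x * (|Pi e| : Lp ℝ 2 μ) x
            + (|D2| : Lp ℝ 2 μ) x * (|Pi e| : Lp ℝ 2 μ) x) ∂μ := step1
      _ = L * ((inner ℝ |D1| |Pi e| : ℝ) + (inner ℝ |D2| |Pi e| : ℝ)) := step2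
      _ ≤ L * ((‖D1‖ + ‖D2‖) * ‖Pi e‖) := by
          refine mul_le_mul_of_nonneg_left ?_ hL
          have hr : (‖D1‖ + ‖D2‖) * ‖Pi e‖ = ‖D1‖ * ‖Pi e‖ + ‖D2‖ * ‖Pi e‖ := by ring
          rw [hr]
          exact add_le_add step3 step4
  -- combine
  rw [hP2] at h3
  have master : (1 / δt) * ‖Pi e‖ ^ 2 + lo * ‖grad e‖ ^ 2
      ≤ L * ((‖D1‖ + ‖D2‖) * ‖Pi e‖) := by linarith
  -- numeric conclusion
  have hS1 : ‖D1‖ ≤ CD * ‖grad (w₁ - w₁')‖ := hcoer (w₁ - w₁')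
  have hS2 : ‖D2‖ ≤ CD * ‖grad (w₂ - w₂')‖ := hcoer (w₂ - w₂')
  have hST : ‖D1‖ + ‖D2‖ ≤ CD * (‖grad (w₁ - w₁')‖ + ‖grad (w₂ - w₂')‖) := by
    rw [mul_add]; exact add_le_add hS1 hS2
  exact key_arith hδt hlo hL hCD (norm_nonneg _)
    (add_nonneg (norm_nonneg _) (norm_nonneg _))
    (add_nonneg (norm_nonneg _) (norm_nonneg _)) hST master

/-- the one-step linearised map `G(w₁, w₂) = (u, v)` of the gradient scheme is
Lipschitz of constant `(√2/2) L C_D √δt (λ̲₁^{-1/2} + λ̲₂^{-1/2})` for the norm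
`‖(w₁,w₂)‖ = ‖∇_D w₁‖ + ‖∇_D w₂‖`. -/
theorem stmt5 {d : ℕ} (Ω : Set (EuclideanSpace ℝ (Fin d)))
    (hΩmeas : MeasurableSet Ω) (hΩbdd : Bornology.IsBounded Ω)
    (X : Type*) [AddCommGroup X] [Module ℝ X] [FiniteDimensional ℝ X]
    (Pi : X →ₗ[ℝ] Lp ℝ 2 (volume.restrict Ω))
    (grad : X →ₗ[ℝ] Lp (EuclideanSpace ℝ (Fin d)) 2 (volume.restrict Ω))
    (hgradinj : Function.Injective grad)
    (CD : ℝ) (hCD : 0 ≤ CD)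
    (hcoer : ∀ w : X, ‖Pi w‖ ≤ CD * ‖grad w‖)
    (Λ₁ Λ₂ : EuclideanSpace ℝ (Fin d) → Matrix (Fin d) (Fin d) ℝ)
    (hΛ₁meas : ∀ i j, Measurable fun x => Λ₁ x i j)
    (hΛ₂meas : ∀ i j, Measurable fun x => Λ₂ x i j)
    (lo₁ hi₁ lo₂ hi₂ : ℝ) (hlo₁ : 0 < lo₁) (hlohi₁ : lo₁ ≤ hi₁)
    (hlo₂ : 0 < lo₂) (hlohi₂ : lo₂ ≤ hi₂)
    (hΛ₁sym : ∀ᵐ x ∂(volume.restrict Ω), (Λ₁ x).IsSymm)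
    (hΛ₂sym : ∀ᵐ x ∂(volume.restrict Ω), (Λ₂ x).IsSymm)
    (hΛ₁ell : ∀ᵐ x ∂(volume.restrict Ω), ∀ ξ : EuclideanSpace ℝ (Fin d),
      lo₁ * ‖ξ‖ ^ 2 ≤ qf (Λ₁ x) ξ ξ ∧ qf (Λ₁ x) ξ ξ ≤ hi₁ * ‖ξ‖ ^ 2)
    (hΛ₂ell : ∀ᵐ x ∂(volume.restrict Ω), ∀ ξ : EuclideanSpace ℝ (Fin d),
      lo₂ * ‖ξ‖ ^ 2 ≤ qf (Λ₂ x) ξ ξ ∧ qf (Λ₂ x) ξ ξ ≤ hi₂ * ‖ξ‖ ^ 2)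
    (F₁ F₂ : ℝ → ℝ → ℝ) (L : ℝ)
    (hF₁ : ∀ a a' b b' : ℝ, |F₁ a b - F₁ a' b'| ≤ L * (|a - a'| + |b - b'|))
    (hF₂ : ∀ a a' b b' : ℝ, |F₂ a b - F₂ a' b'| ≤ L * (|a - a'| + |b - b'|))
    (δt : ℝ) (hδt : 0 < δt) (u₀ v₀ : X) (w₁ w₂ w₁' w₂' : X) (u v u' v' : X)
    (hu : ∀ φ : X,
      (1 / δt) * (∫ x, (Pi (u - u₀)) x * (Pi φ) x ∂(volume.restrict Ω))
        + (∫ x, qf (Λ₁ x) ((grad u) x) ((grad φ) x) ∂(volume.restrict Ω))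
      = ∫ x, F₁ ((Pi w₁) x) ((Pi w₂) x) * (Pi φ) x ∂(volume.restrict Ω))
    (hv : ∀ ψ : X,
      (1 / δt) * (∫ x, (Pi (v - v₀)) x * (Pi ψ) x ∂(volume.restrict Ω))
        + (∫ x, qf (Λ₂ x) ((grad v) x) ((grad ψ) x) ∂(volume.restrict Ω))
      = ∫ x, F₂ ((Pi w₁) x) ((Pi w₂) x) * (Pi ψ) x ∂(volume.restrict Ω))
    (hu' : ∀ φ : X,
      (1 / δt) * (∫ x, (Pi (u' - u₀)) x * (Pi φ) x ∂(volume.restrict Ω))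
        + (∫ x, qf (Λ₁ x) ((grad u') x) ((grad φ) x) ∂(volume.restrict Ω))
      = ∫ x, F₁ ((Pi w₁') x) ((Pi w₂') x) * (Pi φ) x ∂(volume.restrict Ω))
    (hv' : ∀ ψ : X,
      (1 / δt) * (∫ x, (Pi (v' - v₀)) x * (Pi ψ) x ∂(volume.restrict Ω))
        + (∫ x, qf (Λ₂ x) ((grad v') x) ((grad ψ) x) ∂(volume.restrict Ω))
      = ∫ x, F₂ ((Pi w₁') x) ((Pi w₂') x) * (Pi ψ) x ∂(volume.restrict Ω)) :
    ‖grad (u - u')‖ + ‖grad (v - v')‖ ≤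
      (Real.sqrt 2 / 2) * L * CD * Real.sqrt δt * ((Real.sqrt lo₁)⁻¹ + (Real.sqrt lo₂)⁻¹) *
        (‖grad (w₁ - w₁')‖ + ‖grad (w₂ - w₂')‖) := by
  have hfin : IsFiniteMeasure (volume.restrict Ω) :=
    ⟨by rw [Measure.restrict_apply_univ]; exact hΩbdd.measure_lt_top⟩
  have hL : 0 ≤ L := by
    have h := hF₁ 0 1 0 0
    simp only [sub_zero, sub_self, abs_zero, add_zero, zero_sub, abs_neg, abs_one, mul_one] at h
    exact le_trans (abs_nonneg _) h
  have h1 := key Pi grad hCD hcoer hΛ₁meas hlo₁ hΛ₁sym hΛ₁ell hL hF₁ hδt u₀ w₁ w₂ w₁' w₂' u u'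
    hu hu'
  have h2 := key Pi grad hCD hcoer hΛ₂meas hlo₂ hΛ₂sym hΛ₂ell hL hF₂ hδt v₀ w₁ w₂ w₁' w₂' v v'
    hv hv'
  set T := ‖grad (w₁ - w₁')‖ + ‖grad (w₂ - w₂')‖ with hT
  have hT0 : 0 ≤ T := add_nonneg (norm_nonneg _) (norm_nonneg _)
  set K := L * CD * Real.sqrt δt with hK
  have hK0 : 0 ≤ K := mul_nonneg (mul_nonneg hL hCD) (Real.sqrt_nonneg _)
  have hs₁ : 0 < Real.sqrt lo₁ := Real.sqrt_pos.mpr hlo₁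
  have hs₂ : 0 < Real.sqrt lo₂ := Real.sqrt_pos.mpr hlo₂
  have hs2 : (1 : ℝ) ≤ Real.sqrt 2 := by
    rw [show (1 : ℝ) = Real.sqrt 1 from Real.sqrt_one.symm]
    exact Real.sqrt_le_sqrt one_le_two
  have hnn : 0 ≤ K * (((Real.sqrt lo₁)⁻¹ + (Real.sqrt lo₂)⁻¹) * T) := by
    refine mul_nonneg hK0 (mul_nonneg (add_nonneg ?_ ?_) hT0) <;> positivity
  calc ‖grad (u - u')‖ + ‖grad (v - v')‖
      ≤ K / (2 * Real.sqrt lo₁) * T + K / (2 * Real.sqrt lo₂) * T := add_le_add h1 h2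
    _ = (1 / 2) * (K * (((Real.sqrt lo₁)⁻¹ + (Real.sqrt lo₂)⁻¹) * T)) := by
        field_simp
    _ ≤ (Real.sqrt 2 / 2) * (K * (((Real.sqrt lo₁)⁻¹ + (Real.sqrt lo₂)⁻¹) * T)) := by
        refine mul_le_mul_of_nonneg_right ?_ hnn
        linarith
    _ = (Real.sqrt 2 / 2) * L * CD * Real.sqrt δt *
          ((Real.sqrt lo₁)⁻¹ + (Real.sqrt lo₂)⁻¹) * T := by
        rw [hK]; ring
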